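/- Let p be a prime, f ≥ 1, and let x_0, …, x_{f−1} be integers (indexed cyclically mod f) with |x_i| ≤ p for all i, with ∑_{i=0}^{f−1} p^{f−1−i} x_i ≡ 0 (mod p^f − 1), such that x_i = 0 for at least one i, and such that p ≥ 3 or not all x_i equal ±2. Then the set of indices i with x_i ≠ 0 decomposes as a disjoint union of cyclically-consecutive intervals (i, i+1, …, i+j) on each of which (x_i, x_{i+1}, …, x_{i+j}) = ±(−1, p−1, …, p−1, p) (with possibly zero occurrences of p−1). -/

import Mathlib

/-- The set of indices covered by a cyclically-consecutive string starting at `i`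
of length `j+1` in `ZMod f`. -/
def coverSet (f : ℕ) [NeZero f] (i : ZMod f) (j : ℕ) : Finset (ZMod f) :=
  (Finset.range (j + 1)).image (fun t : ℕ => (i + (t : ZMod f)))

/-- `(x_i, x_{i+1}, …, x_{i+j}) = ε·(−1, p−1, …, p−1, p)` with `ε ∈ {±1}`,
the middle entries `p−1` occurring `j−1 ≥ 0` times, and the covered indices distinct. -/
def IsPMString (p f : ℕ) [NeZero f] (x : ZMod f → ℤ) (i : ZMod f) (j : ℕ) (ε : ℤ) : Prop :=
  (ε = 1 ∨ ε = -1) ∧ 1 ≤ j ∧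
  x i = -ε ∧
  (∀ t : ℕ, 1 ≤ t → t < j → x (i + (t : ZMod f)) = ε * ((p : ℤ) - 1)) ∧
  x (i + (j : ZMod f)) = ε * (p : ℤ) ∧
  (coverSet f i j).card = j + 1

/-!
Let `S i = ∑ t < f, p ^ (f - 1 - t) * x (i + t)` be the rotated sums. Since
`p * S i = S (i + 1) + (p ^ f - 1) * x i`, every `S i` is a multiple `c i * (p ^ f - 1)`,
the "carries" `c` satisfy `x i = p * c i - c (i + 1)`, and `(p - 1) * |c i| ≤ p`.
A carry `≥ 2` would force `c (i + 1) ≥ 2` and hence propagate round the whole cycle, which a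
zero digit forbids; so `c i ∈ {-1, 0, 1}`, consecutive nonzero carries agree, and
`x i = 0` exactly when `c i = c (i + 1) = 0`. The strings are the maximal runs of nonzero
carries, each preceded by the zero carry at its start `i`: on a run of sign `ε` the digits
are `-ε, ε (p - 1), …, ε (p - 1), ε p`.
-/

theorem ZMod.forall_of_imp_add_one {f : ℕ} [NeZero f] {P : ZMod f → Prop}
    (h : ∀ i, P i → P (i + 1)) {i : ZMod f} (hi : P i) (j : ZMod f) : P j := by
  have key : ∀ n : ℕ, P (i + n) := by
    intro n
    induction n with
    | zero => simpa using hi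
    | succ n ih => simpa [add_assoc] using h _ ih
  simpa using key (j - i).val

section CyclicSum

variable {R : Type*} [CommRing R] {f : ℕ}

def cyclicSum (q : R) (x : ZMod f → R) (i : ZMod f) : R :=
  ∑ t ∈ Finset.range f, q ^ (f - 1 - t) * x (i + t)

theorem cyclicSum_zero (q : R) (x : ZMod f → R) :
    cyclicSum q x 0 = ∑ i : Fin f, q ^ (f - 1 - i.val) * x (i.val : ZMod f) := by
  simp [cyclicSum, Fin.sum_univ_eq_sum_range (fun t => q ^ (f - 1 - t) * x (t : ZMod f))]

theorem mul_cyclicSum [NeZero f] (q : R) (x : ZMod f → R) (i : ZMod f) :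
    q * cyclicSum q x i = cyclicSum q x (i + 1) + (q ^ f - 1) * x i := by
  obtain ⟨n, rfl⟩ : ∃ n, f = n + 1 := Nat.exists_eq_add_one.mpr (NeZero.pos f)
  have hwrap : i + 1 + (n : ZMod (n + 1)) = i := by
    rw [add_assoc, add_comm (1 : ZMod (n + 1)), ← Nat.cast_add_one, ZMod.natCast_self, add_zero]
  have hlhs : q * cyclicSum q x i =
      ∑ t ∈ Finset.range n, q ^ (n - t) * x (i + 1 + t) + q ^ (n + 1) * x i := by
    rw [cyclicSum, Finset.mul_sum, Finset.sum_range_succ']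
    congr 1
    · refine Finset.sum_congr rfl fun t ht => ?_
      rw [← mul_assoc, ← pow_succ', Nat.cast_succ, add_comm (t : ZMod (n + 1)) 1, ← add_assoc]
      congr 2
      have := Finset.mem_range.mp ht
      omega
    · rw [Nat.cast_zero, add_zero, Nat.add_sub_cancel, Nat.sub_zero, ← mul_assoc, ← pow_succ']
  have hrhs : cyclicSum q x (i + 1) =
      ∑ t ∈ Finset.range n, q ^ (n - t) * x (i + 1 + t) + x i := by
    simp [cyclicSum, Finset.sum_range_succ, hwrap]
  rw [hlhs, hrhs]
  ring

theorem dvd_cyclicSum [NeZero f] {q : R} {x : ZMod f → R} (h : q ^ f - 1 ∣ cyclicSum q x 0)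
    (i : ZMod f) : q ^ f - 1 ∣ cyclicSum q x i := by
  refine ZMod.forall_of_imp_add_one (P := fun i => q ^ f - 1 ∣ cyclicSum q x i)
    (fun j hj => ?_) h i
  rw [eq_sub_of_add_eq (mul_cyclicSum q x j).symm]
  exact dvd_sub (dvd_mul_of_dvd_right hj q) (dvd_mul_right _ _)

end CyclicSum

theorem sub_one_mul_abs_cyclicSum_le {f : ℕ} [NeZero f] {q B : ℤ} (hq : 1 ≤ q)
    {x : ZMod f → ℤ} (hx : ∀ i, |x i| ≤ B) (i : ZMod f) :
    (q - 1) * |cyclicSum q x i| ≤ B * (q ^ f - 1) := by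
  have habs : |cyclicSum q x i| ≤ B * ∑ t ∈ Finset.range f, q ^ t := by
    rw [Finset.mul_sum, ← Finset.sum_range_reflect]
    refine (Finset.abs_sum_le_sum_abs _ _).trans (Finset.sum_le_sum fun t _ => ?_)
    rw [abs_mul, abs_pow, abs_of_nonneg (by omega), mul_comm]
    exact mul_le_mul_of_nonneg_right (hx _) (by positivity)
  calc (q - 1) * |cyclicSum q x i| ≤ (q - 1) * (B * ∑ t ∈ Finset.range f, q ^ t) :=
        mul_le_mul_of_nonneg_left habs (by omega)
    _ = B * (q ^ f - 1) := by rw [← geom_sum_mul]; ring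

section Carries

variable {f : ℕ} [NeZero f] {p : ℤ} {x c : ZMod f → ℤ}

theorem exists_carries (hp : 2 ≤ p) (hx : ∀ i, |x i| ≤ p) (h : p ^ f - 1 ∣ cyclicSum p x 0) :
    ∃ c : ZMod f → ℤ, (∀ i, x i = p * c i - c (i + 1)) ∧ ∀ i, (p - 1) * |c i| ≤ p := by
  have hM : 0 < p ^ f - 1 := sub_pos.mpr (one_lt_pow₀ (by omega) (NeZero.ne f))
  choose c hc using dvd_cyclicSum h
  refine ⟨c, fun i => ?_, fun i => ?_⟩
  · have hrec := mul_cyclicSum p x i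
    rw [hc, hc] at hrec
    have := mul_left_cancel₀ hM.ne' (by linear_combination hrec :
      (p ^ f - 1) * (p * c i) = (p ^ f - 1) * (c (i + 1) + x i))
    linarith
  · have hbound := sub_one_mul_abs_cyclicSum_le (q := p) (by omega) hx i
    rw [hc, abs_mul, abs_of_pos hM] at hbound
    exact le_of_mul_le_mul_left (by linarith) hM

variable (hp : 2 ≤ p) (hxc : ∀ i, x i = p * c i - c (i + 1))
include hp hxc

theorem carry_lt_two (hx : ∀ i, x i ≤ p) (hc : ∀ i, (p - 1) * c i ≤ p)
    (hzero : ∃ i, x i = 0) (i : ZMod f) : c i < 2 := by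
  by_contra! hi
  have hall : ∀ j, 2 ≤ c j := ZMod.forall_of_imp_add_one (P := fun j => 2 ≤ c j)
    (fun j hj => by nlinarith [hxc j, hx j]) hi
  obtain ⟨i₀, hi₀⟩ := hzero
  have hnext : 2 * p ≤ c (i₀ + 1) := by nlinarith [hxc i₀, hall i₀]
  nlinarith [hc (i₀ + 1), mul_le_mul_of_nonneg_left hnext (by omega : (0 : ℤ) ≤ p - 1)]

theorem abs_carry_le_one (hx : ∀ i, |x i| ≤ p) (hc : ∀ i, (p - 1) * |c i| ≤ p)
    (hzero : ∃ i, x i = 0) (i : ZMod f) : |c i| ≤ 1 := by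
  have habs : ∀ j, (p - 1) * c j ≤ p ∧ (p - 1) * -c j ≤ p := fun j =>
    ⟨(mul_le_mul_of_nonneg_left (le_abs_self (c j)) (by omega)).trans (hc j),
      (mul_le_mul_of_nonneg_left (neg_le_abs (c j)) (by omega)).trans (hc j)⟩
  have hlt := carry_lt_two hp hxc (fun j => (abs_le.mp (hx j)).2) (fun j => (habs j).1) hzero i
  have hgt : -c i < 2 := carry_lt_two (x := -x) (c := -c) hp
    (fun j => by simp only [Pi.neg_apply, hxc]; ring)
    (fun j => neg_le.mp (abs_le.mp (hx j)).1) (fun j => (habs j).2)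
    (hzero.imp fun j hj => by simp [hj]) i
  exact abs_le.mpr ⟨by omega, by omega⟩

end Carries

section CarryDigits

variable {f : ℕ} {p : ℤ} {x c : ZMod f → ℤ} (hxc : ∀ i, x i = p * c i - c (i + 1))
  (hc : ∀ i, |c i| ≤ 1)
include hxc hc

theorem carry_add_one_eq_of_ne_zero (hx : ∀ i, |x i| ≤ p) {j : ZMod f} (hj : c j ≠ 0)
    (hj' : c (j + 1) ≠ 0) : c (j + 1) = c j := by
  have := abs_le.mp (hx j)
  have := abs_le.mp (hc j)
  have := abs_le.mp (hc (j + 1))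
  have hxj := hxc j
  rcases (by omega : c j = 1 ∨ c j = -1) with h | h <;>
  rcases (by omega : c (j + 1) = 1 ∨ c (j + 1) = -1) with h' | h' <;>
  · rw [h, h'] at hxj; omega

theorem digit_eq_zero_iff (hp : 2 ≤ p) (j : ZMod f) : x j = 0 ↔ c j = 0 ∧ c (j + 1) = 0 := by
  have := abs_le.mp (hc j)
  have := abs_le.mp (hc (j + 1))
  rw [hxc]
  constructor
  · intro h
    rcases (by omega : c j = 1 ∨ c j = 0 ∨ c j = -1) with h' | h' | h' <;>
    · rw [h'] at h; omega
  · rintro ⟨h, h'⟩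
    rw [h, h']; ring

end CarryDigits

theorem card_coverSet {f : ℕ} [NeZero f] (i : ZMod f) {j : ℕ} (hj : j < f) :
    (coverSet f i j).card = j + 1 := by
  rw [coverSet, Finset.card_image_of_injOn, Finset.card_range]
  intro a ha b hb hab
  have := congrArg ZMod.val (add_left_cancel hab)
  simp only [Finset.coe_range, Set.mem_Iio] at ha hb
  rwa [ZMod.val_cast_of_lt (by omega), ZMod.val_cast_of_lt (by omega)] at this

section ZeroRuns

variable {α : Type*} [Zero α] {f : ℕ}

/- Both distances are junk (`sInf ∅ = 0`) unless `c` has a zero. -/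
noncomputable def nextZeroDist (c : ZMod f → α) (u : ZMod f) : ℕ :=
  sInf {k | 0 < k ∧ c (u + k) = 0}

noncomputable def prevZeroDist (c : ZMod f → α) (u : ZMod f) : ℕ :=
  sInf {r | c (u - r) = 0}

variable {c : ZMod f → α}

theorem ne_zero_of_lt_nextZeroDist {u : ZMod f} {t : ℕ} (ht : 0 < t)
    (htu : t < nextZeroDist c u) : c (u + t) ≠ 0 :=
  fun h => Nat.notMem_of_lt_sInf htu ⟨ht, h⟩

theorem ne_zero_of_lt_prevZeroDist {u : ZMod f} {r : ℕ} (hr : r < prevZeroDist c u) :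
    c (u - r) ≠ 0 :=
  Nat.notMem_of_lt_sInf hr

theorem apply_add_eq_of_lt_nextZeroDist
    (hc : ∀ j, c j ≠ 0 → c (j + 1) ≠ 0 → c (j + 1) = c j) {i : ZMod f} {t : ℕ} (ht : 0 < t)
    (htm : t < nextZeroDist c i) : c (i + t) = c (i + 1) := by
  induction t with
  | zero => omega
  | succ t ih =>
    rcases Nat.eq_zero_or_pos t with rfl | htpos
    · simp
    · have hne := ne_zero_of_lt_nextZeroDist htpos (by omega : t < nextZeroDist c i)
      have hne' := ne_zero_of_lt_nextZeroDist t.succ_pos htm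
      rw [Nat.cast_succ, ← add_assoc] at hne' ⊢
      rw [hc _ hne hne', ih htpos (by omega)]

theorem prevZeroDist_add {i : ZMod f} (hi : c i = 0) {t : ℕ} (ht : t < nextZeroDist c i) :
    prevZeroDist c (i + t) = t := by
  refine le_antisymm (Nat.sInf_le (by simpa using hi))
    (le_csInf ⟨t, by simpa using hi⟩ fun r hr => ?_)
  by_contra! hrt
  refine ne_zero_of_lt_nextZeroDist (Nat.sub_pos_of_lt hrt) ((Nat.sub_le t r).trans_lt ht) ?_
  rwa [Nat.cast_sub hrt.le, ← add_sub_assoc]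

variable [NeZero f]

theorem nextZeroDist_pos_and_eq_zero {i : ZMod f} (hi : c i = 0) :
    0 < nextZeroDist c i ∧ c (i + nextZeroDist c i) = 0 :=
  Nat.sInf_mem (s := {k | 0 < k ∧ c (i + k) = 0}) ⟨f, NeZero.pos f, by simpa using hi⟩

theorem nextZeroDist_le {i : ZMod f} (hi : c i = 0) : nextZeroDist c i ≤ f :=
  Nat.sInf_le ⟨NeZero.pos f, by simpa using hi⟩

theorem apply_sub_prevZeroDist (hz : ∃ i, c i = 0) (u : ZMod f) :
    c (u - prevZeroDist c u) = 0 := by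
  obtain ⟨i, hi⟩ := hz
  exact Nat.sInf_mem (s := {r | c (u - r) = 0}) ⟨(u - i).val, by simpa using hi⟩

theorem mem_coverSet_nextZeroDist_sub_one {i u : ZMod f} (hi : c i = 0) :
    u ∈ coverSet f i (nextZeroDist c i - 1) ↔ ∃ t < nextZeroDist c i, i + t = u := by
  simp [coverSet, Nat.sub_add_cancel (nextZeroDist_pos_and_eq_zero hi).1]

theorem eq_of_mem_coverSet_nextZeroDist {i i' u : ZMod f} (hi : c i = 0) (hi' : c i' = 0)
    (hu : u ∈ coverSet f i (nextZeroDist c i - 1))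
    (hu' : u ∈ coverSet f i' (nextZeroDist c i' - 1)) : i = i' := by
  obtain ⟨t, ht, rfl⟩ := (mem_coverSet_nextZeroDist_sub_one hi).1 hu
  obtain ⟨t', ht', htt'⟩ := (mem_coverSet_nextZeroDist_sub_one hi').1 hu'
  obtain rfl : t' = t := by rw [← prevZeroDist_add hi' ht', htt', prevZeroDist_add hi ht]
  exact (add_right_cancel htt').symm

theorem exists_mem_coverSet_nextZeroDist_iff (hz : ∃ i, c i = 0) (u : ZMod f) :
    (∃ i, c i = 0 ∧ c (i + 1) ≠ 0 ∧ u ∈ coverSet f i (nextZeroDist c i - 1)) ↔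
      c u ≠ 0 ∨ c (u + 1) ≠ 0 := by
  constructor
  · rintro ⟨i, hi, hi1, hu⟩
    obtain ⟨t, ht, rfl⟩ := (mem_coverSet_nextZeroDist_sub_one hi).1 hu
    rcases Nat.eq_zero_or_pos t with rfl | htpos
    · simpa using Or.inr hi1
    · exact Or.inl (ne_zero_of_lt_nextZeroDist htpos ht)
  · intro hu
    set r := prevZeroDist c u
    have hi : c (u - r) = 0 := apply_sub_prevZeroDist hz u
    have hbetween : ∀ s : ℕ, 0 < s → s ≤ r → c (u - r + s) ≠ 0 := by
      intro s hs hsr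
      rw [show u - r + s = u - ((r - s : ℕ) : ZMod f) by rw [Nat.cast_sub hsr]; ring]
      exact ne_zero_of_lt_prevZeroDist (by omega)
    obtain ⟨hmpos, hmzero⟩ := nextZeroDist_pos_and_eq_zero hi
    have hr : r < nextZeroDist c (u - r) := by
      by_contra! h
      exact hbetween _ hmpos h hmzero
    refine ⟨u - r, hi, ?_, (mem_coverSet_nextZeroDist_sub_one hi).2 ⟨r, hr, by ring⟩⟩
    rcases Nat.eq_zero_or_pos r with h0 | hpos
    · rw [h0, Nat.cast_zero, sub_zero] at hi ⊢
      exact hu.resolve_left (not_not.mpr hi)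
    · simpa using hbetween 1 one_pos hpos

end ZeroRuns

theorem isPMString_of_carry {p f : ℕ} [NeZero f] {x c : ZMod f → ℤ}
    (hxc : ∀ i, x i = p * c i - c (i + 1))
    (hc : ∀ j, c j ≠ 0 → c (j + 1) ≠ 0 → c (j + 1) = c j)
    {i : ZMod f} (hi : c i = 0) (hε : c (i + 1) = 1 ∨ c (i + 1) = -1) :
    IsPMString p f x i (nextZeroDist c i - 1) (c (i + 1)) := by
  obtain ⟨hm, hmzero⟩ := nextZeroDist_pos_and_eq_zero hi
  have hmf := nextZeroDist_le hi
  set m := nextZeroDist c i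
  have hm2 : 2 ≤ m := by
    by_contra! h
    rw [show m = 1 by omega, Nat.cast_one] at hmzero
    simp [hmzero] at hε
  have hrun : ∀ t : ℕ, 0 < t → t < m → c (i + t) = c (i + 1) :=
    fun t => apply_add_eq_of_lt_nextZeroDist hc
  have hrun' : ∀ t : ℕ, t + 1 < m → c (i + t + 1) = c (i + 1) := fun t ht => by
    rw [add_assoc, ← Nat.cast_add_one]
    exact hrun _ t.succ_pos ht
  refine ⟨hε, by omega, by rw [hxc, hi]; ring, fun t ht1 htm => ?_, ?_,
    card_coverSet i (by omega)⟩
  · rw [hxc, hrun t ht1 (by omega), hrun' t (by omega)]; ring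
  · have hlast : i + ((m - 1 : ℕ) : ZMod f) + 1 = i + m := by
      rw [Nat.cast_sub (by omega)]; ring
    rw [hxc, hlast, hmzero, hrun _ (by omega) (by omega)]; ring

theorem stmt15_general (p f : ℕ) (hp : p.Prime) [NeZero f]
    (x : ZMod f → ℤ) (hx : ∀ i, |x i| ≤ (p : ℤ))
    (hcong : ((p : ℤ) ^ f - 1) ∣
      ∑ i : Fin f, (p : ℤ) ^ (f - 1 - i.val) * x ((i.val : ZMod f)))
    (hzero : ∃ i, x i = 0) :
    ∃ T : Finset (ZMod f × ℕ × ℤ),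
      (∀ s ∈ T, IsPMString p f x s.1 s.2.1 s.2.2) ∧
      (∀ s ∈ T, ∀ s' ∈ T, s ≠ s' →
        Disjoint (coverSet f s.1 s.2.1) (coverSet f s'.1 s'.2.1)) ∧
      (∀ i : ZMod f, x i = 0 ↔ ∀ s ∈ T, i ∉ coverSet f s.1 s.2.1) := by
  classical
  have hp2 : (2 : ℤ) ≤ p := by exact_mod_cast hp.two_le
  obtain ⟨c, hxc, hcp⟩ := exists_carries hp2 hx (by rwa [cyclicSum_zero])
  have hc := abs_carry_le_one hp2 hxc hx hcp hzero
  have hdigit := digit_eq_zero_iff hxc hc hp2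
  have hflip j := carry_add_one_eq_of_ne_zero (j := j) hxc hc hx
  have hz : ∃ i, c i = 0 := hzero.imp fun i hi => ((hdigit i).1 hi).1
  refine ⟨(Finset.univ.filter fun i => c i = 0 ∧ c (i + 1) ≠ 0).image
    fun i => (i, nextZeroDist c i - 1, c (i + 1)), ?_, ?_, fun u => ?_⟩
  · simp only [Finset.forall_mem_image, Finset.mem_filter, Finset.mem_univ, true_and]
    rintro i ⟨hi, hi1⟩
    have := abs_le.mp (hc (i + 1))
    exact isPMString_of_carry hxc hflip hi (by omega)
  · simp only [Finset.forall_mem_image, Finset.mem_filter, Finset.mem_univ, true_and]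
    rintro i ⟨hi, -⟩ i' ⟨hi', -⟩ hne
    exact Finset.disjoint_left.mpr fun u hu hu' =>
      hne (by rw [eq_of_mem_coverSet_nextZeroDist hi hi' hu hu'])
  · rw [hdigit, ← not_iff_not, not_and_or, ← exists_mem_coverSet_nextZeroDist_iff hz]
    simp

theorem stmt15 (p f : ℕ) (hp : p.Prime) [NeZero f]
    (x : ZMod f → ℤ) (hx : ∀ i, |x i| ≤ (p : ℤ))
    (hcong : ((p : ℤ) ^ f - 1) ∣
      ∑ i : Fin f, (p : ℤ) ^ (f - 1 - i.val) * x ((i.val : ZMod f)))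
    (hzero : ∃ i, x i = 0)
    (hnot2 : 3 ≤ p ∨ ¬((∀ i, x i = 2) ∨ (∀ i, x i = -2))) :
    ∃ T : Finset (ZMod f × ℕ × ℤ),
      (∀ s ∈ T, IsPMString p f x s.1 s.2.1 s.2.2) ∧
      (∀ s ∈ T, ∀ s' ∈ T, s ≠ s' →
        Disjoint (coverSet f s.1 s.2.1) (coverSet f s'.1 s'.2.1)) ∧
      (∀ i : ZMod f, x i = 0 ↔ ∀ s ∈ T, i ∉ coverSet f s.1 s.2.1) :=
  stmt15_general p f hp x hx hcong hzero
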